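/- (Theorem 1, part 2, converse direction.) Let Φ_x ∈ ℝ^{(T+1)n×(T+1)n} and Φ_u ∈ ℝ^{(T+1)p×(T+1)n} be block lower triangular matrices satisfying (I − ZÂ)Φ_x − ZB̂Φ_u = I. Then Φ_x is invertible, the controller K := Φ_u · Φ_x^{-1} is block lower triangular, I − Z(Â + B̂K) is invertible, and the closed loop achieves the given responses: (I − Z(Â + B̂K))^{-1} = Φ_x and K·(I − Z(Â + B̂K))^{-1} = Φ_u. -/

import Mathlib

/-- Block lower triangular: the `((t,i),(s,j))` entry vanishes whenever `s > t`. -/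
def BlockLT {a b T : ℕ}
    (M : Matrix (Fin (T + 1) × Fin a) (Fin (T + 1) × Fin b) ℝ) : Prop :=
  ∀ (t s : Fin (T + 1)) (i : Fin a) (j : Fin b), t < s → M (t, i) (s, j) = 0

/-- Strictly block lower triangular: the `((t,i),(s,j))` entry vanishes whenever `s ≥ t`. -/
def StrictBlockLT {a b T : ℕ}
    (M : Matrix (Fin (T + 1) × Fin a) (Fin (T + 1) × Fin b) ℝ) : Prop :=
  ∀ (t s : Fin (T + 1)) (i : Fin a) (j : Fin b), t ≤ s → M (t, i) (s, j) = 0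

/-- The block-downshift matrix `Z`: the `((t,i),(s,j))` entry is `1` iff `t = s + 1` and `i = j`. -/
def shiftZ (n T : ℕ) : Matrix (Fin (T + 1) × Fin n) (Fin (T + 1) × Fin n) ℝ :=
  fun r c => if (r.1 : ℕ) = (c.1 : ℕ) + 1 ∧ r.2 = c.2 then 1 else 0

/-- `Â = blkdiag(A, …, A)`. -/
def hatA {n : ℕ} (T : ℕ) (A : Matrix (Fin n) (Fin n) ℝ) :
    Matrix (Fin (T + 1) × Fin n) (Fin (T + 1) × Fin n) ℝ :=
  fun r c => if r.1 = c.1 then A r.2 c.2 else 0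

/-- `B̂ = blkdiag(B, …, B, 0)`. -/
def hatB {n p : ℕ} (T : ℕ) (B : Matrix (Fin n) (Fin p) ℝ) :
    Matrix (Fin (T + 1) × Fin n) (Fin (T + 1) × Fin p) ℝ :=
  fun r c => if r.1 = c.1 ∧ (c.1 : ℕ) < T then B r.2 c.2 else 0

/-!
`(I − ZÂ)Φ_x − ZB̂Φ_u = I` says `Φ_x = I + Z(ÂΦ_x + B̂Φ_u)`, and `Z` times a block lower
triangular matrix is strictly block lower triangular, hence nilpotent; so `Φ_x` is invertible,
and its inverse is block lower triangular like `Φ_x`. Since `KΦ_x = Φ_u`, the same identity reads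
`(I − Z(Â + B̂K))Φ_x = I`, which gives the closed-loop responses.
-/

open OrderDual

section BlockLowerTriangular

variable {a b c T : ℕ}

theorem BlockLT.mul {M : Matrix (Fin (T + 1) × Fin a) (Fin (T + 1) × Fin b) ℝ}
    {N : Matrix (Fin (T + 1) × Fin b) (Fin (T + 1) × Fin c) ℝ}
    (hM : BlockLT M) (hN : BlockLT N) : BlockLT (M * N) := by
  intro t s i j hts
  rw [Matrix.mul_apply]
  refine Finset.sum_eq_zero fun ⟨r, m⟩ _ => ?_
  rcases lt_or_ge t r with htr | hrt
  · rw [hM t r i m htr, zero_mul]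
  · rw [hN r s m j (hrt.trans_lt hts), mul_zero]

theorem BlockLT.add {M N : Matrix (Fin (T + 1) × Fin a) (Fin (T + 1) × Fin b) ℝ}
    (hM : BlockLT M) (hN : BlockLT N) : BlockLT (M + N) := by
  intro t s i j hts
  rw [Matrix.add_apply, hM t s i j hts, hN t s i j hts, add_zero]

theorem blockLT_iff_blockTriangular {M : Matrix (Fin (T + 1) × Fin a) (Fin (T + 1) × Fin a) ℝ} :
    BlockLT M ↔ M.BlockTriangular (fun r => toDual r.1) :=
  ⟨fun h ⟨t, i⟩ ⟨s, j⟩ hst => h t s i j hst, fun h t s i j hts => h (i := (t, i)) (j := (s, j)) hts⟩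

theorem BlockLT.inv {M : Matrix (Fin (T + 1) × Fin a) (Fin (T + 1) × Fin a) ℝ}
    (hM : BlockLT M) : BlockLT M⁻¹ := by
  by_cases hdet : IsUnit M.det
  · have := M.invertibleOfIsUnitDet hdet
    exact blockLT_iff_blockTriangular.mpr
      (Matrix.blockTriangular_inv_of_blockTriangular (blockLT_iff_blockTriangular.mp hM))
  · rw [Matrix.nonsing_inv_apply_not_isUnit M hdet]
    exact fun _ _ _ _ _ => rfl

theorem blockLT_hatA (A : Matrix (Fin a) (Fin a) ℝ) : BlockLT (hatA T A) := by
  intro t s i j hts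
  simp [hatA, hts.ne]

theorem blockLT_hatB (B : Matrix (Fin a) (Fin b) ℝ) : BlockLT (hatB T B) := by
  intro t s i j hts
  simp [hatB, hts.ne]

theorem BlockLT.strictBlockLT_shiftZ_mul {L : Matrix (Fin (T + 1) × Fin a) (Fin (T + 1) × Fin b) ℝ}
    (hL : BlockLT L) : StrictBlockLT (shiftZ a T * L) := by
  intro t s i j hts
  rw [Matrix.mul_apply]
  refine Finset.sum_eq_zero fun ⟨r, m⟩ _ => ?_
  by_cases h : (t : ℕ) = r + 1 ∧ i = m
  · rw [hL r s m j (Fin.lt_def.mpr (by have := Fin.le_def.mp hts; omega)), mul_zero]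
  · simp [shiftZ, h]

theorem StrictBlockLT.pow_apply_eq_zero {N : Matrix (Fin (T + 1) × Fin a) (Fin (T + 1) × Fin a) ℝ}
    (hN : StrictBlockLT N) (k : ℕ) {t s : Fin (T + 1)} (i j : Fin a) (h : (t : ℕ) < s + k) :
    (N ^ k) (t, i) (s, j) = 0 := by
  induction k generalizing t s i j with
  | zero =>
    exact Matrix.one_apply_ne fun he => by
      have := congrArg (fun r => (r.1 : ℕ)) he
      simp only at this
      omega
  | succ k ih =>
    rw [pow_succ, Matrix.mul_apply]
    refine Finset.sum_eq_zero fun ⟨r, m⟩ _ => ?_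
    by_cases hr : (t : ℕ) < r + k
    · rw [ih i m hr, zero_mul]
    · rw [hN r s m j (Fin.le_def.mpr (by omega)), mul_zero]

theorem StrictBlockLT.isNilpotent {N : Matrix (Fin (T + 1) × Fin a) (Fin (T + 1) × Fin a) ℝ}
    (hN : StrictBlockLT N) : IsNilpotent N :=
  ⟨T + 1, by
    ext ⟨t, i⟩ ⟨s, j⟩
    exact hN.pow_apply_eq_zero (T + 1) i j (by omega)⟩

end BlockLowerTriangular

/-- Theorem 1, part 2 (converse). If block lower triangular `Φ_x, Φ_u` satisfy
`(I − ZÂ)Φ_x − ZB̂Φ_u = I`, then `Φ_x` is invertible, `K := Φ_u Φ_x⁻¹` is block lower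
triangular, `I − Z(Â + B̂K)` is invertible, and the closed loop achieves the responses:
`(I − Z(Â + B̂K))⁻¹ = Φ_x` and `K (I − Z(Â + B̂K))⁻¹ = Φ_u`. -/
theorem sls_converse {n p T : ℕ}
    (A : Matrix (Fin n) (Fin n) ℝ) (B : Matrix (Fin n) (Fin p) ℝ)
    (Φx : Matrix (Fin (T + 1) × Fin n) (Fin (T + 1) × Fin n) ℝ)
    (Φu : Matrix (Fin (T + 1) × Fin p) (Fin (T + 1) × Fin n) ℝ)
    (hx : BlockLT Φx) (hu : BlockLT Φu)
    (haff : (1 - shiftZ n T * hatA T A) * Φx - shiftZ n T * hatB T B * Φu = 1) :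
    IsUnit Φx ∧
    BlockLT (Φu * Φx⁻¹) ∧
    IsUnit (1 - shiftZ n T * (hatA T A + hatB T B * (Φu * Φx⁻¹))) ∧
    (1 - shiftZ n T * (hatA T A + hatB T B * (Φu * Φx⁻¹)))⁻¹ = Φx ∧
    (Φu * Φx⁻¹) * (1 - shiftZ n T * (hatA T A + hatB T B * (Φu * Φx⁻¹)))⁻¹ = Φu := by
  set K := Φu * Φx⁻¹
  have hΦx : Φx = 1 + shiftZ n T * (hatA T A * Φx + hatB T B * Φu) := by
    rw [mul_add, ← Matrix.mul_assoc, ← Matrix.mul_assoc]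
    linear_combination (norm := noncomm_ring) haff
  have hunit : IsUnit Φx := by
    rw [hΦx]
    exact (((blockLT_hatA A).mul hx).add ((blockLT_hatB B).mul hu)).strictBlockLT_shiftZ_mul
      |>.isNilpotent.isUnit_one_add
  have hKΦx : K * Φx = Φu := by
    rw [Matrix.mul_assoc, Matrix.nonsing_inv_mul _ ((Matrix.isUnit_iff_isUnit_det _).mp hunit),
      Matrix.mul_one]
  have hloop : (1 - shiftZ n T * (hatA T A + hatB T B * K)) * Φx = 1 := calc
    _ = (1 - shiftZ n T * hatA T A) * Φx - shiftZ n T * hatB T B * (K * Φx) := by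
      simp only [mul_add, sub_mul, add_mul, Matrix.mul_assoc, sub_sub]
    _ = 1 := by rw [hKΦx, haff]
  have hinv := Matrix.inv_eq_right_inv hloop
  exact ⟨hunit, hu.mul hx.inv, IsUnit.of_mul_eq_one _ hloop, hinv, by rw [hinv, hKΦx]⟩
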